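/- Let X be a finite alphabet, let P be a probability distribution on X with P(a) > 0 for all a ∈ X, and let ρ > 0. For x ∈ X^n let Ĥ_x be the empirical entropy of x, let P̃_n(x) = 2^{−nĤ_x} / ∑_{x'} 2^{−nĤ_{x'}} be the universal guessing distribution, and let M_n = ∑_{x∈X^n} P^n(x) · P̃_n(x) ∑_{k=1}^∞ k^ρ (1 − P̃_n(x))^{k−1}, the expected ρ-th moment of the number of independent random guesses drawn from P̃_n needed to guess a realization of the memoryless source P. Then limsup_{n→∞} (1/n) log₂ M_n ≤ (1+ρ) log₂ ∑_{a∈X} P(a)^{1/(1+ρ)}, i.e., universal randomized guessing according to P̃_n achieves the optimal guessing exponent ρ H^{1/(1+ρ)}(P). -/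

import Mathlib

set_option linter.unusedSectionVars false

open Finset

variable {X : Type*} [Fintype X] [DecidableEq X]

/-- Number of occurrences of the symbol `a` in the string `x ∈ X^n`. -/
def occ {n : ℕ} (x : Fin n → X) (a : X) : ℕ :=
  (Finset.univ.filter fun i => x i = a).card

/-- Empirical entropy (base 2) of the string `x ∈ X^n`, with `0 log 0 = 0`. -/
noncomputable def empEnt {n : ℕ} (x : Fin n → X) : ℝ :=
  -∑ a : X, ((occ x a : ℝ) / n) * Real.logb 2 ((occ x a : ℝ) / n)

/-- The universal guessing distribution `P̃_n(x) = 2^{-nĤ_x}/∑_{x'} 2^{-nĤ_{x'}}`. -/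
noncomputable def univDist {n : ℕ} (x : Fin n → X) : ℝ :=
  (2 : ℝ) ^ (-(n : ℝ) * empEnt x) / ∑ x' : Fin n → X, (2 : ℝ) ^ (-(n : ℝ) * empEnt x')

lemma occ_le {n : ℕ} (x : Fin n → X) (a : X) : occ x a ≤ n := by
  classical
  calc occ x a ≤ (Finset.univ : Finset (Fin n)).card := Finset.card_filter_le _ _
  _ = n := by simp

lemma sum_occ {n : ℕ} (x : Fin n → X) : ∑ a : X, occ x a = n := by
  classical
  have := Finset.card_eq_sum_card_fiberwise (f := x) (s := Finset.univ) (t := Finset.univ)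
    (fun i _ => Finset.mem_univ _)
  simp only [Finset.card_univ, Fintype.card_fin] at this
  conv_rhs => rw [this]
  rfl

lemma prod_occ_pow {n : ℕ} (x : Fin n → X) (f : X → ℝ) :
    ∏ i, f (x i) = ∏ a : X, f a ^ occ x a := by
  classical
  rw [← Finset.prod_fiberwise_of_maps_to (g := x) (fun i _ => Finset.mem_univ _) (fun i => f (x i))]
  refine Finset.prod_congr rfl fun a _ => ?_
  rw [Finset.prod_congr rfl (fun i hi => ?_), Finset.prod_const]
  · rfl
  · simp only [Finset.mem_filter] at hi
    rw [hi.2]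

lemma neg_n_empEnt {n : ℕ} (hn : 0 < n) (x : Fin n → X) :
    -(n:ℝ) * (-∑ a : X, ((occ x a : ℝ) / n) * Real.logb 2 ((occ x a : ℝ) / n))
      = ∑ a : X, (occ x a : ℝ) * Real.logb 2 ((occ x a : ℝ) / n) := by
  have hn' : (n:ℝ) ≠ 0 := Nat.cast_ne_zero.mpr hn.ne'
  rw [neg_mul_neg, Finset.mul_sum]
  refine Finset.sum_congr rfl fun a _ => ?_
  field_simp

lemma twopow_negnH {n : ℕ} (hn : 0 < n) (x : Fin n → X) :
    (2:ℝ) ^ (-(n:ℝ) * empEnt x) = ∏ a : X, ((occ x a : ℝ) / n) ^ occ x a := by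
  rw [empEnt, neg_n_empEnt hn x, Real.rpow_sum_of_pos two_pos]
  refine Finset.prod_congr rfl fun a _ => ?_
  rcases Nat.eq_zero_or_pos (occ x a) with h | h
  · simp [h]
  · have hq : (0:ℝ) < (occ x a : ℝ) / n := by positivity
    rw [mul_comm, Real.rpow_mul (by norm_num), Real.rpow_logb two_pos (by norm_num) hq,
      Real.rpow_natCast]

lemma sum_twopow_le {n : ℕ} (hn : 0 < n) :
    ∑ x : Fin n → X, (2:ℝ) ^ (-(n:ℝ) * empEnt x)
      ≤ ((n:ℝ) + 1) ^ (Fintype.card X) := by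
  classical
  have key : ∑ x : Fin n → X, (2:ℝ) ^ (-(n:ℝ) * empEnt x)
      = ∑ N ∈ Finset.univ.image (fun x : Fin n → X => occ x),
          ∑ x ∈ Finset.univ.filter (fun x : Fin n → X => occ x = N),
            ∏ a : X, ((N a : ℝ) / n) ^ N a := by
    rw [← Finset.sum_fiberwise_of_maps_to (g := fun x : Fin n → X => occ x)
      (fun x _ => Finset.mem_image_of_mem _ (Finset.mem_univ x))]
    refine Finset.sum_congr rfl fun x _ => ?_
    refine Finset.sum_congr rfl fun y hy => ?_
    simp only [Finset.mem_filter] at hy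
    rw [twopow_negnH hn, hy.2]
  rw [key]
  have hcard : ((Finset.univ.image (fun x : Fin n → X => occ x)).card : ℝ)
      ≤ ((n:ℝ) + 1) ^ (Fintype.card X) := by
    have : (Finset.univ.image (fun x : Fin n → X => occ x)).card
        ≤ (Finset.univ : Finset (X → Fin (n+1))).card := by
      refine Finset.card_le_card_of_injOn
        (fun N a => (⟨min (N a) n, by omega⟩ : Fin (n+1)))
        (fun N _ => Finset.mem_univ _) ?_
      intro N hN M hM h
      simp only [Finset.coe_image, Set.mem_image] at hN hM
      obtain ⟨x, -, rfl⟩ := hN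
      obtain ⟨y, -, rfl⟩ := hM
      funext a
      have := congrFun h a
      have h1 := occ_le x a
      have h2 := occ_le y a
      simpa [Fin.ext_iff, min_eq_left h1, min_eq_left h2] using this
    calc ((Finset.univ.image (fun x : Fin n → X => occ x)).card : ℝ)
        ≤ ((Finset.univ : Finset (X → Fin (n+1))).card : ℝ) := by exact_mod_cast this
      _ = ((n:ℝ) + 1) ^ (Fintype.card X) := by
          simp [Finset.card_univ, Fintype.card_fun]
  calc ∑ N ∈ Finset.univ.image (fun x : Fin n → X => occ x),
          ∑ x ∈ Finset.univ.filter (fun x : Fin n → X => occ x = N),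
            ∏ a : X, ((N a : ℝ) / n) ^ N a
      ≤ ∑ N ∈ Finset.univ.image (fun x : Fin n → X => occ x), 1 := by
        refine Finset.sum_le_sum fun N hN => ?_
        obtain ⟨x₀, -, rfl⟩ := Finset.mem_image.mp hN
        -- fiber sum ≤ sum over all strings of ∏ i, q (x i), which equals 1
        have hterm : ∀ y ∈ Finset.univ.filter
            (fun y : Fin n → X => occ y = occ x₀),
            ∏ a : X, ((occ x₀ a : ℝ) / n) ^ occ x₀ a
              = ∏ i, ((occ x₀ (y i) : ℝ) / n) := by
          intro y hy
          simp only [Finset.mem_filter] at hy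
          rw [prod_occ_pow y (fun a => (occ x₀ a : ℝ)/n), hy.2]
        calc ∑ y ∈ Finset.univ.filter (fun y : Fin n → X => occ y = occ x₀),
              ∏ a : X, ((occ x₀ a : ℝ) / n) ^ occ x₀ a
            = ∑ y ∈ Finset.univ.filter (fun y : Fin n → X => occ y = occ x₀),
              ∏ i, ((occ x₀ (y i) : ℝ) / n) := Finset.sum_congr rfl hterm
          _ ≤ ∑ y : Fin n → X, ∏ i, ((occ x₀ (y i) : ℝ) / n) := by
              refine Finset.sum_le_sum_of_subset_of_nonneg
                (Finset.filter_subset _ _) fun y _ _ => ?_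
              positivity
          _ = 1 := by
              have := Finset.prod_univ_sum (fun _ : Fin n => (Finset.univ : Finset X))
                (fun _ a => ((occ x₀ a : ℝ) / n))
              rw [Fintype.piFinset_univ] at this
              rw [← this, Finset.prod_const]
              have : ∑ a : X, ((occ x₀ a : ℝ) / n) = 1 := by
                rw [← Finset.sum_div]
                rw [show ∑ a : X, ((occ x₀ a : ℝ)) = ((∑ a : X, occ x₀ a : ℕ) : ℝ) by
                  push_cast; ring]
                rw [sum_occ]
                field_simp
              rw [this, one_pow]
      _ ≤ ((n:ℝ) + 1) ^ (Fintype.card X) := by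
          rw [Finset.sum_const, nsmul_eq_mul, mul_one]
          exact hcard

lemma gibbs_bound (P : X → ℝ) (hP : ∀ a, 0 < P a) (hPsum : ∑ a : X, P a = 1)
    {ρ : ℝ} (hρ : 0 < ρ) {n : ℕ} (hn : 0 < n) (x : Fin n → X) :
    (∏ i, P (x i)) * (2:ℝ) ^ (((1:ℝ)+ρ) * ((n:ℝ) * empEnt x))
      ≤ (∑ a : X, P a ^ (1/(1+ρ))) ^ (((1:ℝ)+ρ) * (n:ℝ)) := by
  classical
  have hX : Nonempty X := by
    by_contra h
    rw [not_nonempty_iff] at h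
    simp [Finset.univ_eq_empty] at hPsum
  have h1ρ : (0:ℝ) < 1 + ρ := by linarith
  set s : ℝ := 1/(1+ρ) with hs
  set B : ℝ := ∑ a : X, P a ^ s with hB
  have hBpos : 0 < B := Finset.sum_pos (fun a _ => Real.rpow_pos_of_pos (hP a) s)
    Finset.univ_nonempty
  have hn' : (n:ℝ) ≠ 0 := Nat.cast_ne_zero.mpr hn.ne'
  have hprodpos : 0 < ∏ i, P (x i) := Finset.prod_pos fun i _ => hP (x i)
  have hLpos : 0 < (∏ i, P (x i)) * (2:ℝ) ^ (((1:ℝ)+ρ) * ((n:ℝ) * empEnt x)) :=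
    mul_pos hprodpos (Real.rpow_pos_of_pos two_pos _)
  have hRpos : (0:ℝ) < B ^ (((1:ℝ)+ρ) * (n:ℝ)) := Real.rpow_pos_of_pos hBpos _
  rw [← Real.exp_log hLpos, ← Real.exp_log hRpos]
  apply Real.exp_le_exp.mpr
  rw [Real.log_mul hprodpos.ne' (Real.rpow_pos_of_pos two_pos _).ne',
    Real.log_rpow two_pos, Real.log_rpow hBpos]
  -- rewrite log of the product
  have hlogprod : Real.log (∏ i, P (x i)) = ∑ a : X, (occ x a : ℝ) * Real.log (P a) := by
    rw [prod_occ_pow x P, Real.log_prod (fun a _ => (pow_pos (hP a) _).ne')]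
    refine Finset.sum_congr rfl fun a _ => ?_
    rw [Real.log_pow]
  -- rewrite n * empEnt * log 2
  have hent : ((n:ℝ) * empEnt x) * Real.log 2
      = -∑ a : X, (occ x a : ℝ) * Real.log ((occ x a : ℝ)/n) := by
    have h := neg_n_empEnt hn x
    simp only [empEnt]
    have h2 : (n:ℝ) * -∑ a : X, ((occ x a : ℝ) / n) * Real.logb 2 ((occ x a : ℝ) / n)
        = -(-(n:ℝ) * -∑ a : X, ((occ x a : ℝ) / n) * Real.logb 2 ((occ x a : ℝ) / n)) := by
      ring
    rw [h2, h, neg_mul, neg_inj, Finset.sum_mul]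
    refine Finset.sum_congr rfl fun a _ => ?_
    rw [Real.logb, mul_assoc, div_mul_cancel₀]
    exact Real.log_ne_zero_of_pos_of_ne_one two_pos (by norm_num)
  rw [hlogprod]
  rw [show ((1:ℝ)+ρ) * ((n:ℝ) * empEnt x) * Real.log 2
      = ((1:ℝ)+ρ) * (((n:ℝ) * empEnt x) * Real.log 2) by ring, hent]
  -- per-term bound
  have key : ∀ a : X, (occ x a : ℝ) * Real.log (P a)
      + (1+ρ) * -((occ x a : ℝ) * Real.log ((occ x a : ℝ)/n))
      ≤ (1+ρ) * ((n:ℝ) * (P a ^ s)/B - (occ x a : ℝ) + (occ x a : ℝ) * Real.log B) := by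
    intro a
    rcases Nat.eq_zero_or_pos (occ x a) with h0 | hpos
    · simp only [h0, Nat.cast_zero, zero_mul, neg_zero, mul_zero, add_zero, sub_zero, zero_add]
      have : (0:ℝ) ≤ (n:ℝ) * (P a ^ s)/B :=
        div_nonneg (mul_nonneg (Nat.cast_nonneg n) (Real.rpow_pos_of_pos (hP a) s).le) hBpos.le
      nlinarith
    · have hQ : (0:ℝ) < (occ x a : ℝ)/n := by positivity
      have hNa : (0:ℝ) < (occ x a : ℝ) := by exact_mod_cast hpos
      have hPs : (0:ℝ) < P a ^ s := Real.rpow_pos_of_pos (hP a) s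
      have hlogP : Real.log (P a) = (1+ρ) * Real.log (P a ^ s) := by
        rw [Real.log_rpow (hP a), hs]
        field_simp
      have hlog : Real.log (P a ^ s / ((occ x a : ℝ)/n * B))
          ≤ P a ^ s / ((occ x a : ℝ)/n * B) - 1 :=
        Real.log_le_sub_one_of_pos (by positivity)
      have hexpand : Real.log (P a ^ s / ((occ x a : ℝ)/n * B))
          = Real.log (P a ^ s) - Real.log ((occ x a : ℝ)/n) - Real.log B := by
        rw [Real.log_div hPs.ne' (by positivity), Real.log_mul hQ.ne' hBpos.ne']
        ring
      rw [hexpand] at hlog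
      have hmul := mul_le_mul_of_nonneg_left hlog hNa.le
      have hfrac : (occ x a : ℝ) * (P a ^ s / ((occ x a : ℝ)/n * B))
          = (n:ℝ) * (P a ^ s)/B := by
        field_simp
      rw [hlogP]
      nlinarith [hmul, hfrac]
  have hsumN : ∑ a : X, (occ x a : ℝ) = (n:ℝ) := by
    exact_mod_cast congrArg (fun m : ℕ => (m:ℝ)) (sum_occ x)
  calc ∑ a : X, (occ x a : ℝ) * Real.log (P a)
        + (1+ρ) * -∑ a : X, (occ x a : ℝ) * Real.log ((occ x a : ℝ)/n)
      = ∑ a : X, ((occ x a : ℝ) * Real.log (P a)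
          + (1+ρ) * -((occ x a : ℝ) * Real.log ((occ x a : ℝ)/n))) := by
        rw [Finset.sum_add_distrib, ← Finset.sum_neg_distrib, Finset.mul_sum]
    _ ≤ ∑ a : X, (1+ρ) * ((n:ℝ) * (P a ^ s)/B - (occ x a : ℝ) + (occ x a : ℝ) * Real.log B) :=
        Finset.sum_le_sum fun a _ => key a
    _ = (1+ρ) * ((n:ℝ) * (∑ a : X, P a ^ s)/B - (n:ℝ) + (n:ℝ) * Real.log B) := by
        rw [← Finset.mul_sum]
        congr 1
        rw [Finset.sum_add_distrib, Finset.sum_sub_distrib, ← Finset.sum_div,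
          ← Finset.mul_sum, ← Finset.sum_mul, hsumN]
    _ = (1+ρ) * ((n:ℝ)) * Real.log B := by
        rw [← hB, mul_div_assoc, div_self hBpos.ne']
        ring

lemma nat_pow_le_factorial_choose (k m : ℕ) :
    (k+1)^m ≤ m.factorial * (k+m).choose m := by
  calc (k+1)^m = (k+m+1-m)^m := by congr 1; omega
    _ ≤ (k+m).descFactorial m := Nat.pow_sub_le_descFactorial _ _
    _ = m.factorial * (k+m).choose m := Nat.descFactorial_eq_factorial_mul_choose _ _

lemma rpow_le_one_add_pow {t : ℝ} (ht : 0 ≤ t) {ρ : ℝ} (hρ : 0 < ρ) :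
    t ^ ρ ≤ 1 + t ^ (Nat.ceil ρ) := by
  rcases le_or_gt t 1 with h | h
  · have := Real.rpow_le_one ht h hρ.le
    have : (0:ℝ) ≤ t ^ (Nat.ceil ρ) := pow_nonneg ht _
    linarith [Real.rpow_le_one ht h hρ.le]
  · have h1 : t ^ ρ ≤ t ^ ((Nat.ceil ρ : ℕ) : ℝ) :=
      Real.rpow_le_rpow_of_exponent_le h.le (Nat.le_ceil ρ)
    rw [Real.rpow_natCast] at h1
    have : (0:ℝ) ≤ t ^ (Nat.ceil ρ) := pow_nonneg (by linarith) _
    linarith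

lemma summable_moment {ρ : ℝ} (hρ : 0 < ρ) {p : ℝ} (hp : 0 < p) (hp1 : p ≤ 1) :
    Summable (fun k : ℕ => ((k:ℝ)+1) ^ ρ * (1-p)^k) ∧
    (∑' k : ℕ, ((k:ℝ)+1) ^ ρ * (1-p)^k)
      ≤ (1 + ((Nat.ceil ρ).factorial : ℝ)) * p ^ (-(1+ρ)) := by
  set m := Nat.ceil ρ with hm
  set z := 1 - p with hz
  have hz0 : 0 ≤ z := by simp [hz]; linarith
  have hz1 : z < 1 := by simp [hz]; linarith
  have hzn : ‖z‖ < 1 := by rw [Real.norm_eq_abs, abs_of_nonneg hz0]; exact hz1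
  have hppow : (0:ℝ) < p ^ (-ρ) := Real.rpow_pos_of_pos hp _
  -- the dominating series
  set C : ℝ := p ^ (-ρ) * p ^ m * (m.factorial : ℝ) with hC
  have hbound : ∀ k : ℕ, ((k:ℝ)+1) ^ ρ * z^k
      ≤ p ^ (-ρ) * z^k + C * (((k+m).choose m : ℝ) * z^k) := by
    intro k
    have hk1 : (0:ℝ) ≤ (k:ℝ)+1 := by positivity
    have hkp : (0:ℝ) ≤ ((k:ℝ)+1) * p := by positivity
    have h1 : ((k:ℝ)+1) ^ ρ = (((k:ℝ)+1) * p) ^ ρ * p ^ (-ρ) := by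
      rw [Real.mul_rpow hk1 hp.le, mul_assoc, ← Real.rpow_add hp, add_neg_cancel,
        Real.rpow_zero, mul_one]
    have h2 : (((k:ℝ)+1) * p) ^ ρ ≤ 1 + (((k:ℝ)+1) * p) ^ m := rpow_le_one_add_pow hkp hρ
    have h3 : (((k:ℝ)+1) * p) ^ m ≤ p ^ m * ((m.factorial : ℝ) * ((k+m).choose m : ℝ)) := by
      rw [mul_pow]
      rw [mul_comm (((k:ℝ)+1)^m)]
      refine mul_le_mul_of_nonneg_left ?_ (by positivity)
      have := nat_pow_le_factorial_choose k m
      calc ((k:ℝ)+1)^m = (((k+1)^m : ℕ) : ℝ) := by push_cast; ring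
        _ ≤ ((m.factorial * (k+m).choose m : ℕ) : ℝ) := by exact_mod_cast this
        _ = (m.factorial : ℝ) * ((k+m).choose m : ℝ) := by push_cast; ring
    have hzk : (0:ℝ) ≤ z^k := pow_nonneg hz0 _
    calc ((k:ℝ)+1) ^ ρ * z^k = (((k:ℝ)+1) * p) ^ ρ * p ^ (-ρ) * z^k := by rw [h1]
      _ ≤ (1 + p ^ m * ((m.factorial : ℝ) * ((k+m).choose m : ℝ))) * p ^ (-ρ) * z^k := by
          refine mul_le_mul_of_nonneg_right (mul_le_mul_of_nonneg_right ?_ hppow.le) hzk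
          exact h2.trans (by linarith)
      _ = p ^ (-ρ) * z^k + C * (((k+m).choose m : ℝ) * z^k) := by rw [hC]; ring
  have hS1 : Summable (fun k : ℕ => p ^ (-ρ) * z^k) :=
    (summable_geometric_of_lt_one hz0 hz1).mul_left _
  have hS2 : Summable (fun k : ℕ => C * (((k+m).choose m : ℝ) * z^k)) :=
    (summable_choose_mul_geometric_of_norm_lt_one m hzn).mul_left _
  have hSbound := hS1.add hS2
  have hnonneg : ∀ k : ℕ, 0 ≤ ((k:ℝ)+1) ^ ρ * z^k := by
    intro k
    have : (0:ℝ) ≤ ((k:ℝ)+1) ^ ρ := Real.rpow_nonneg (by positivity) _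
    positivity
  have hsummable : Summable (fun k : ℕ => ((k:ℝ)+1) ^ ρ * z^k) :=
    Summable.of_nonneg_of_le hnonneg hbound hSbound
  refine ⟨hsummable, ?_⟩
  have hle := Summable.tsum_le_tsum hbound hsummable hSbound
  rw [Summable.tsum_add hS1 hS2, tsum_mul_left, tsum_mul_left,
    tsum_geometric_of_lt_one hz0 hz1,
    tsum_choose_mul_geometric_of_norm_lt_one m hzn] at hle
  have h1z : 1 - z = p := by rw [hz]; ring
  rw [h1z] at hle
  refine hle.trans (le_of_eq ?_)
  have hpm : p ^ (m+1) ≠ 0 := by positivity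
  have : p ^ (-(1+ρ)) = p ^ (-ρ) * p⁻¹ := by
    rw [show -(1+ρ) = -ρ + (-1) by ring, Real.rpow_add hp, Real.rpow_neg_one]
  rw [this, hC]
  field_simp
  ring

lemma moment_ge {ρ : ℝ} (hρ : 0 < ρ) {p : ℝ} (hp : 0 < p) (hp1 : p ≤ 1) :
    p⁻¹ ≤ ∑' k : ℕ, ((k:ℝ)+1) ^ ρ * (1-p)^k := by
  have hz0 : (0:ℝ) ≤ 1 - p := by linarith
  have hz1 : 1 - p < 1 := by linarith
  have hgeo : Summable (fun k : ℕ => (1-p)^k) := summable_geometric_of_lt_one hz0 hz1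
  have hle : ∀ k : ℕ, (1-p)^k ≤ ((k:ℝ)+1) ^ ρ * (1-p)^k := by
    intro k
    have h1 : (1:ℝ) ≤ ((k:ℝ)+1) ^ ρ := Real.one_le_rpow
      (by have : (0:ℝ) ≤ (k:ℝ) := Nat.cast_nonneg k; linarith) hρ.le
    nlinarith [pow_nonneg hz0 k]
  have := Summable.tsum_le_tsum hle hgeo (summable_moment hρ hp hp1).1
  rwa [tsum_geometric_of_lt_one hz0 hz1, show 1 - (1-p) = p by ring] at this

lemma sum_prod_eq_pow {n : ℕ} (h : X → ℝ) :
    ∑ x : Fin n → X, ∏ i, h (x i) = (∑ a : X, h a) ^ n := by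
  classical
  have := Finset.prod_univ_sum (fun _ : Fin n => (Finset.univ : Finset X))
    (fun _ a => h a)
  rw [Fintype.piFinset_univ] at this
  rw [← this, Finset.prod_const, Finset.card_univ, Fintype.card_fin]

lemma univDist_pos_le {n : ℕ} (hX : Nonempty X) (x : Fin n → X) :
    0 < univDist x ∧ univDist x ≤ 1 := by
  have hne : Nonempty (Fin n → X) := ⟨fun _ => hX.some⟩
  have hu : ∀ y : Fin n → X, (0:ℝ) < (2:ℝ) ^ (-(n:ℝ) * empEnt y) :=
    fun y => Real.rpow_pos_of_pos two_pos _
  have hS : (0:ℝ) < ∑ x' : Fin n → X, (2:ℝ) ^ (-(n:ℝ) * empEnt x') :=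
    Finset.sum_pos (fun y _ => hu y) Finset.univ_nonempty
  constructor
  · exact div_pos (hu x) hS
  · rw [univDist, div_le_one hS]
    exact Finset.single_le_sum (fun y _ => (hu y).le) (Finset.mem_univ x)

lemma Mn_le (P : X → ℝ) (hP : ∀ a, 0 < P a) (hPsum : ∑ a : X, P a = 1)
    {ρ : ℝ} (hρ : 0 < ρ) {n : ℕ} (hn : 0 < n) :
    (∑ x : Fin n → X, (∏ i, P (x i)) *
        (univDist x * ∑' k : ℕ, ((k : ℝ) + 1) ^ ρ * (1 - univDist x) ^ k))
      ≤ (1 + ((Nat.ceil ρ).factorial : ℝ)) * (((n:ℝ)+1) ^ (Fintype.card X)) ^ ρ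
        * (((n:ℝ)+1) ^ (Fintype.card X))
        * (∑ a : X, P a ^ (1/(1+ρ))) ^ ((1+ρ) * (n:ℝ)) := by
  classical
  have hX : Nonempty X := by
    by_contra h
    rw [not_nonempty_iff] at h
    simp [Finset.univ_eq_empty] at hPsum
  have hne : Nonempty (Fin n → X) := ⟨fun _ => hX.some⟩
  set Cρ : ℝ := 1 + ((Nat.ceil ρ).factorial : ℝ) with hCρ
  have hCρ1 : (1:ℝ) ≤ Cρ := by
    rw [hCρ]
    have : (1:ℝ) ≤ ((Nat.ceil ρ).factorial : ℝ) := by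
      exact_mod_cast Nat.one_le_iff_ne_zero.mpr (Nat.factorial_ne_zero _)
    linarith
  set S : ℝ := ∑ x' : Fin n → X, (2:ℝ) ^ (-(n:ℝ) * empEnt x') with hSdef
  have hupos : ∀ y : Fin n → X, (0:ℝ) < (2:ℝ) ^ (-(n:ℝ) * empEnt y) :=
    fun y => Real.rpow_pos_of_pos two_pos _
  have hS : (0:ℝ) < S := Finset.sum_pos (fun y _ => hupos y) Finset.univ_nonempty
  set R : ℝ := ((n:ℝ)+1) ^ (Fintype.card X) with hRdef
  have hSR : S ≤ R := by
    have := sum_twopow_le (X := X) hn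
    simpa [hSdef, hRdef] using this
  set B : ℝ := ∑ a : X, P a ^ (1/(1+ρ)) with hBdef
  have h1ρ : (0:ℝ) < 1 + ρ := by linarith
  have hBpos : 0 < B := Finset.sum_pos
    (fun a _ => Real.rpow_pos_of_pos (hP a) _) Finset.univ_nonempty
  have hBn : (0:ℝ) < B ^ ((1+ρ) * (n:ℝ)) := Real.rpow_pos_of_pos hBpos _
  have key : ∀ x : Fin n → X,
      (∏ i, P (x i)) * (univDist x * ∑' k : ℕ, ((k : ℝ) + 1) ^ ρ * (1 - univDist x) ^ k)
        ≤ (Cρ * S ^ ρ * B ^ ((1+ρ) * (n:ℝ))) * (2:ℝ) ^ (-(n:ℝ) * empEnt x) := by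
    intro x
    obtain ⟨hp0, hp1⟩ := univDist_pos_le hX x
    set u : ℝ := (2:ℝ) ^ (-(n:ℝ) * empEnt x) with hudef
    have hu : 0 < u := hupos x
    have hprodpos : (0:ℝ) < ∏ i, P (x i) := Finset.prod_pos fun i _ => hP (x i)
    have hT : (∑' k : ℕ, ((k : ℝ) + 1) ^ ρ * (1 - univDist x) ^ k)
        ≤ Cρ * univDist x ^ (-(1+ρ)) := (summable_moment hρ hp0 hp1).2
    have step1 : univDist x * (∑' k : ℕ, ((k : ℝ) + 1) ^ ρ * (1 - univDist x) ^ k)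
        ≤ Cρ * univDist x ^ (-ρ) := by
      calc univDist x * (∑' k : ℕ, ((k : ℝ) + 1) ^ ρ * (1 - univDist x) ^ k)
          ≤ univDist x * (Cρ * univDist x ^ (-(1+ρ))) :=
            mul_le_mul_of_nonneg_left hT hp0.le
        _ = Cρ * (univDist x ^ (1:ℝ) * univDist x ^ (-(1+ρ))) := by
            rw [Real.rpow_one]; ring
        _ = Cρ * univDist x ^ (-ρ) := by
            rw [← Real.rpow_add hp0, show (1:ℝ) + -(1+ρ) = -ρ by ring]
    have step2 : univDist x ^ (-ρ) = u * (2:ℝ) ^ ((1+ρ) * ((n:ℝ) * empEnt x)) * S ^ ρ := by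
      have hud : univDist x = u / S := rfl
      rw [hud, Real.div_rpow hu.le hS.le, Real.rpow_neg hS.le, div_inv_eq_mul,
        hudef, ← Real.rpow_mul (by norm_num : (0:ℝ) ≤ 2),
        show (-(n:ℝ) * empEnt x) * (-ρ)
          = (-(n:ℝ) * empEnt x) + ((1+ρ) * ((n:ℝ) * empEnt x)) by ring,
        Real.rpow_add two_pos]
    have step3 : (∏ i, P (x i)) * (2:ℝ) ^ ((1+ρ) * ((n:ℝ) * empEnt x))
        ≤ B ^ ((1+ρ) * (n:ℝ)) := gibbs_bound P hP hPsum hρ hn x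
    calc (∏ i, P (x i)) * (univDist x * ∑' k : ℕ, ((k : ℝ) + 1) ^ ρ * (1 - univDist x) ^ k)
        ≤ (∏ i, P (x i)) * (Cρ * univDist x ^ (-ρ)) :=
          mul_le_mul_of_nonneg_left step1 hprodpos.le
      _ = (Cρ * S ^ ρ) * (((∏ i, P (x i)) * (2:ℝ) ^ ((1+ρ) * ((n:ℝ) * empEnt x))) * u) := by
          rw [step2]; ring
      _ ≤ (Cρ * S ^ ρ) * (B ^ ((1+ρ) * (n:ℝ)) * u) := by
          refine mul_le_mul_of_nonneg_left ?_ ?_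
          · exact mul_le_mul_of_nonneg_right step3 hu.le
          · have : (0:ℝ) ≤ S ^ ρ := (Real.rpow_pos_of_pos hS ρ).le
            positivity
      _ = (Cρ * S ^ ρ * B ^ ((1+ρ) * (n:ℝ))) * u := by ring
  calc (∑ x : Fin n → X, (∏ i, P (x i)) *
        (univDist x * ∑' k : ℕ, ((k : ℝ) + 1) ^ ρ * (1 - univDist x) ^ k))
      ≤ ∑ x : Fin n → X, (Cρ * S ^ ρ * B ^ ((1+ρ) * (n:ℝ))) * (2:ℝ) ^ (-(n:ℝ) * empEnt x) :=
        Finset.sum_le_sum fun x _ => key x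
    _ = Cρ * S ^ ρ * B ^ ((1+ρ) * (n:ℝ)) * S := by
        rw [← Finset.mul_sum, hSdef]
    _ ≤ Cρ * R ^ ρ * B ^ ((1+ρ) * (n:ℝ)) * R := by
        have hSRρ : S ^ ρ ≤ R ^ ρ := Real.rpow_le_rpow hS.le hSR hρ.le
        have h0 : (0:ℝ) ≤ Cρ := by linarith
        have hRpos : (0:ℝ) < R := lt_of_lt_of_le hS hSR
        have t1 : Cρ * S ^ ρ * B ^ ((1+ρ) * (n:ℝ)) * S
            ≤ Cρ * R ^ ρ * B ^ ((1+ρ) * (n:ℝ)) * S :=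
          mul_le_mul_of_nonneg_right
            (mul_le_mul_of_nonneg_right (mul_le_mul_of_nonneg_left hSRρ h0) hBn.le) hS.le
        have t2 : Cρ * R ^ ρ * B ^ ((1+ρ) * (n:ℝ)) * S
            ≤ Cρ * R ^ ρ * B ^ ((1+ρ) * (n:ℝ)) * R := by
          refine mul_le_mul_of_nonneg_left hSR ?_
          have : (0:ℝ) ≤ R ^ ρ := (Real.rpow_pos_of_pos hRpos ρ).le
          positivity
        exact t1.trans t2
    _ = Cρ * R ^ ρ * R * B ^ ((1+ρ) * (n:ℝ)) := by ring

lemma one_le_Mn (P : X → ℝ) (hP : ∀ a, 0 < P a) (hPsum : ∑ a : X, P a = 1)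
    {ρ : ℝ} (hρ : 0 < ρ) (n : ℕ) :
    1 ≤ ∑ x : Fin n → X, (∏ i, P (x i)) *
        (univDist x * ∑' k : ℕ, ((k : ℝ) + 1) ^ ρ * (1 - univDist x) ^ k) := by
  classical
  have hX : Nonempty X := by
    by_contra h
    rw [not_nonempty_iff] at h
    simp [Finset.univ_eq_empty] at hPsum
  have key : ∀ x : Fin n → X, ∏ i, P (x i) ≤ (∏ i, P (x i)) *
      (univDist x * ∑' k : ℕ, ((k : ℝ) + 1) ^ ρ * (1 - univDist x) ^ k) := by
    intro x
    obtain ⟨hp0, hp1⟩ := univDist_pos_le hX x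
    have hT := moment_ge hρ hp0 hp1
    have h1 : (1:ℝ) ≤ univDist x * ∑' k : ℕ, ((k : ℝ) + 1) ^ ρ * (1 - univDist x) ^ k := by
      calc (1:ℝ) = univDist x * (univDist x)⁻¹ := by
            rw [mul_inv_cancel₀ hp0.ne']
        _ ≤ univDist x * ∑' k : ℕ, ((k : ℝ) + 1) ^ ρ * (1 - univDist x) ^ k :=
            mul_le_mul_of_nonneg_left hT hp0.le
    have hprodpos : (0:ℝ) < ∏ i, P (x i) := Finset.prod_pos fun i _ => hP (x i)
    nlinarith
  calc (1:ℝ) = (∑ a : X, P a) ^ n := by rw [hPsum, one_pow]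
    _ = ∑ x : Fin n → X, ∏ i, P (x i) := (sum_prod_eq_pow P).symm
    _ ≤ _ := Finset.sum_le_sum fun x _ => key x

/-- Theorem 1 of the paper: universal randomized guessing from `P̃_n` achieves the
optimal guessing exponent `ρ H^{1/(1+ρ)}(P) = (1+ρ) log₂ ∑_a P(a)^{1/(1+ρ)}`. -/
theorem universal_randomized_guessing_achieves_exponent
    (P : X → ℝ) (hP : ∀ a, 0 < P a) (hPsum : ∑ a : X, P a = 1) (ρ : ℝ) (hρ : 0 < ρ) :
    Filter.limsup
        (fun n : ℕ =>
          (1 / (n : ℝ)) * Real.logb 2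
            (∑ x : Fin n → X, (∏ i, P (x i)) *
              (univDist x * ∑' k : ℕ, ((k : ℝ) + 1) ^ ρ * (1 - univDist x) ^ k)))
        Filter.atTop ≤
      (1 + ρ) * Real.logb 2 (∑ a : X, P a ^ (1 / (1 + ρ))) := by
  classical
  have hX : Nonempty X := by
    by_contra h
    rw [not_nonempty_iff] at h
    simp [Finset.univ_eq_empty] at hPsum
  have h1ρ : (0:ℝ) < 1 + ρ := by linarith
  set B : ℝ := ∑ a : X, P a ^ (1 / (1 + ρ)) with hBdef
  have hBpos : 0 < B := Finset.sum_pos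
    (fun a _ => Real.rpow_pos_of_pos (hP a) _) Finset.univ_nonempty
  have hB1 : (1:ℝ) ≤ B := by
    have hterm : ∀ a ∈ Finset.univ, P a ≤ P a ^ (1/(1+ρ)) := by
      intro a _
      have hPa1 : P a ≤ 1 := by
        rw [← hPsum]
        exact Finset.single_le_sum (fun b _ => (hP b).le) (Finset.mem_univ a)
      calc P a = P a ^ (1:ℝ) := (Real.rpow_one _).symm
        _ ≤ P a ^ (1/(1+ρ)) := Real.rpow_le_rpow_of_exponent_ge (hP a) hPa1
            (by rw [div_le_one h1ρ]; linarith)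
    calc (1:ℝ) = ∑ a : X, P a := hPsum.symm
      _ ≤ B := Finset.sum_le_sum hterm
  set L : ℝ := (1 + ρ) * Real.logb 2 B with hLdef
  set Cρ : ℝ := 1 + ((Nat.ceil ρ).factorial : ℝ) with hCρ
  have hCρ1 : (1:ℝ) ≤ Cρ := by
    rw [hCρ]
    have : (1:ℝ) ≤ ((Nat.ceil ρ).factorial : ℝ) := by
      exact_mod_cast Nat.one_le_iff_ne_zero.mpr (Nat.factorial_ne_zero _)
    linarith
  set c₁ : ℝ := Real.logb 2 Cρ with hc₁
  set c₂ : ℝ := (ρ + 1) * (Fintype.card X) with hc₂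
  -- nonnegativity
  have hF0 : ∀ n : ℕ, 0 ≤ (1 / (n : ℝ)) * Real.logb 2
      (∑ x : Fin n → X, (∏ i, P (x i)) *
        (univDist x * ∑' k : ℕ, ((k : ℝ) + 1) ^ ρ * (1 - univDist x) ^ k)) := by
    intro n
    exact mul_nonneg (by positivity)
      (Real.logb_nonneg one_lt_two (one_le_Mn P hP hPsum hρ n))
  -- main estimate
  have hFle : ∀ n : ℕ, 0 < n →
      (1 / (n : ℝ)) * Real.logb 2
        (∑ x : Fin n → X, (∏ i, P (x i)) *
          (univDist x * ∑' k : ℕ, ((k : ℝ) + 1) ^ ρ * (1 - univDist x) ^ k))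
      ≤ (1 / (n:ℝ)) * (c₁ + c₂ * Real.logb 2 ((n:ℝ)+1)) + L := by
    intro n hn
    have hn' : (n:ℝ) ≠ 0 := Nat.cast_ne_zero.mpr hn.ne'
    have hM1 := one_le_Mn P hP hPsum hρ n
    have hMpos : (0:ℝ) < ∑ x : Fin n → X, (∏ i, P (x i)) *
        (univDist x * ∑' k : ℕ, ((k : ℝ) + 1) ^ ρ * (1 - univDist x) ^ k) := by linarith
    have hMle := Mn_le P hP hPsum hρ hn
    set R : ℝ := ((n:ℝ)+1) ^ (Fintype.card X) with hRdef
    have hRpos : (0:ℝ) < R := by positivity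
    have hRρpos : (0:ℝ) < R ^ ρ := Real.rpow_pos_of_pos hRpos ρ
    have hBnpos : (0:ℝ) < B ^ ((1+ρ) * (n:ℝ)) := Real.rpow_pos_of_pos hBpos _
    have hCρpos : (0:ℝ) < Cρ := by linarith
    have hlogle : Real.logb 2 (∑ x : Fin n → X, (∏ i, P (x i)) *
        (univDist x * ∑' k : ℕ, ((k : ℝ) + 1) ^ ρ * (1 - univDist x) ^ k))
        ≤ Real.logb 2 (Cρ * R ^ ρ * R * B ^ ((1+ρ) * (n:ℝ))) :=
      Real.logb_le_logb_of_le one_lt_two hMpos hMle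
    have hexpand : Real.logb 2 (Cρ * R ^ ρ * R * B ^ ((1+ρ) * (n:ℝ)))
        = c₁ + c₂ * Real.logb 2 ((n:ℝ)+1) + (1+ρ) * (n:ℝ) * Real.logb 2 B := by
      rw [Real.logb_mul (by positivity) hBnpos.ne',
        Real.logb_mul (by positivity) hRpos.ne',
        Real.logb_mul hCρpos.ne' hRρpos.ne',
        Real.logb_rpow_eq_mul_logb_of_pos hRpos,
        Real.logb_rpow_eq_mul_logb_of_pos hBpos,
        hRdef, Real.logb_pow, hc₁, hc₂]
      ring
    have hmull := mul_le_mul_of_nonneg_left (hlogle.trans_eq hexpand)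
      (by positivity : (0:ℝ) ≤ 1/(n:ℝ))
    have hsplit : (1/(n:ℝ)) * (c₁ + c₂ * Real.logb 2 ((n:ℝ)+1)
        + (1+ρ) * (n:ℝ) * Real.logb 2 B)
        = (1/(n:ℝ)) * (c₁ + c₂ * Real.logb 2 ((n:ℝ)+1)) + L := by
      rw [hLdef]
      field_simp
    linarith [hmull, hsplit.le, hsplit.ge]
  -- the error term tends to zero
  have htend : Filter.Tendsto
      (fun n : ℕ => (1/(n:ℝ)) * (c₁ + c₂ * Real.logb 2 ((n:ℝ)+1)))
      Filter.atTop (nhds 0) := by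
    have h2 : Filter.Tendsto (fun n : ℕ => Real.log ((n:ℝ)+1) / (n:ℝ))
        Filter.atTop (nhds 0) := by
      have hlo : (fun n : ℕ => Real.log ((n:ℝ)+1)) =o[Filter.atTop]
          (fun n : ℕ => (n:ℝ)) := by
        have comp := Real.isLittleO_log_id_atTop.comp_tendsto
          (Filter.tendsto_atTop_add_const_right Filter.atTop (1:ℝ)
            tendsto_natCast_atTop_atTop)
        refine comp.trans_isBigO ?_
        rw [Asymptotics.isBigO_iff]
        refine ⟨2, ?_⟩
        filter_upwards [Filter.eventually_ge_atTop 1] with n hn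
        have h1n : (1:ℝ) ≤ (n:ℝ) := by exact_mod_cast hn
        simp only [Function.comp_apply, id_eq, Real.norm_eq_abs]
        rw [abs_of_nonneg (by linarith), abs_of_nonneg (by linarith)]
        linarith
      exact hlo.tendsto_div_nhds_zero
    have h1 : Filter.Tendsto (fun n : ℕ => c₁ / (n:ℝ)) Filter.atTop (nhds 0) :=
      tendsto_const_div_atTop_nhds_zero_nat c₁
    have hcomb := h1.add (h2.const_mul (c₂ / Real.log 2))
    rw [mul_zero, add_zero] at hcomb
    refine hcomb.congr fun n => ?_
    have hlog2 : Real.log 2 ≠ 0 :=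
      Real.log_ne_zero_of_pos_of_ne_one two_pos (by norm_num)
    rcases Nat.eq_zero_or_pos n with rfl | hn
    · simp [Real.logb]
    · have hn' : (n:ℝ) ≠ 0 := Nat.cast_ne_zero.mpr hn.ne'
      rw [Real.logb]
      field_simp
  refine le_of_forall_pos_le_add fun ε hε => ?_
  refine Filter.limsup_le_of_le
    (Filter.isCoboundedUnder_le_of_le Filter.atTop (x := 0) hF0) ?_
  filter_upwards [Filter.eventually_gt_atTop 0, htend.eventually_lt_const hε]
    with n h1 h2
  have := hFle n h1
  linarith
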